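/- arXiv:2202.13436 — 2 statements merged into one kernel-verified Lean document; each statement's English description precedes it below -/
import Mathlib

section
/- Let Ξ be a finite set of scenarios with probability weights q : Ξ → ℝ satisfying q(ξ) ≥ 0 and ∑_{ξ∈Ξ} q(ξ) = 1. Let E be a real inner product space, and for each ξ ∈ Ξ let f_ξ : E → ℝ be Lipschitz with a common constant L ≥ 0. Let κ ∈ [0,1] and let x^π, p : Ξ → E. Define x⁺(ξ) = κ • x^π(ξ) + (1 − κ) • p(ξ) for each ξ. Then ∑_{ξ} q(ξ) f_ξ(x⁺(ξ)) ≤ ∑_{ξ} q(ξ) f_ξ(x^π(ξ)) + L·(1 − κ)·√(∑_{ξ} q(ξ)·‖p(ξ) − x^π(ξ)‖²). -/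
/-! Pointwise, the blended iterate lies at distance `(1 - κ) ‖p ξ - xπ ξ‖` from `xπ ξ`, so the
Lipschitz bound costs at most `L (1 - κ) ‖p ξ - xπ ξ‖`; averaging over `q`, the weighted mean of
these distances is at most their weighted root mean square by Jensen's inequality for `t ↦ t²`. -/

open Finset

theorem Real.arith_mean_le_sqrt_arith_mean_sq {ι : Type*} (s : Finset ι) (w z : ι → ℝ)
    (hw : ∀ i ∈ s, 0 ≤ w i) (hw' : ∑ i ∈ s, w i = 1) :
    ∑ i ∈ s, w i * z i ≤ √(∑ i ∈ s, w i * z i ^ 2) :=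
  Real.le_sqrt_of_sq_le (Real.pow_arith_mean_le_arith_mean_pow_of_even s w z hw hw' even_two)

theorem apply_smul_add_one_sub_smul_le {E : Type*} [SeminormedAddCommGroup E] [NormedSpace ℝ E]
    {f : E → ℝ} {L : ℝ} (hf : ∀ x x' : E, |f x - f x'| ≤ L * ‖x - x'‖) {κ : ℝ} (hκ : κ ≤ 1)
    (a b : E) : f (κ • a + (1 - κ) • b) ≤ f a + L * (1 - κ) * ‖b - a‖ := by
  have hsub : κ • a + (1 - κ) • b - a = (1 - κ) • (b - a) := by module
  have h := (abs_le.1 (hf (κ • a + (1 - κ) • b) a)).2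
  rw [hsub, norm_smul, Real.norm_of_nonneg (sub_nonneg.2 hκ)] at h
  linarith

theorem expected_blended_iterate_bound_general
    {Ξ : Type*} [Fintype Ξ] (q : Ξ → ℝ) (hq : ∀ ξ, 0 ≤ q ξ)
    (hqsum : ∑ ξ : Ξ, q ξ = 1)
    {E : Type*} [NormedAddCommGroup E] [InnerProductSpace ℝ E]
    (f : Ξ → E → ℝ) (L : ℝ) (hL : 0 ≤ L)
    (hf : ∀ ξ, ∀ x x' : E, |f ξ x - f ξ x'| ≤ L * ‖x - x'‖)
    (κ : ℝ) (hκ1 : κ ≤ 1) (xπ p : Ξ → E) :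
    ∑ ξ : Ξ, q ξ * f ξ (κ • xπ ξ + (1 - κ) • p ξ) ≤
      ∑ ξ : Ξ, q ξ * f ξ (xπ ξ) +
        L * (1 - κ) * Real.sqrt (∑ ξ : Ξ, q ξ * ‖p ξ - xπ ξ‖ ^ 2) := by
  calc ∑ ξ : Ξ, q ξ * f ξ (κ • xπ ξ + (1 - κ) • p ξ)
      ≤ ∑ ξ : Ξ, q ξ * (f ξ (xπ ξ) + L * (1 - κ) * ‖p ξ - xπ ξ‖) :=
        sum_le_sum fun ξ _ ↦ mul_le_mul_of_nonneg_left
          (apply_smul_add_one_sub_smul_le (hf ξ) hκ1 _ _) (hq ξ)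
    _ = ∑ ξ : Ξ, q ξ * f ξ (xπ ξ) + L * (1 - κ) * ∑ ξ : Ξ, q ξ * ‖p ξ - xπ ξ‖ := by
        rw [mul_sum, ← sum_add_distrib]
        exact sum_congr rfl fun ξ _ ↦ by ring
    _ ≤ _ := by
        have hmean := Real.arith_mean_le_sqrt_arith_mean_sq univ q (fun ξ ↦ ‖p ξ - xπ ξ‖)
          (fun ξ _ ↦ hq ξ) hqsum
        have hLκ : 0 ≤ L * (1 - κ) := mul_nonneg hL (sub_nonneg.2 hκ1)
        exact add_le_add_right (mul_le_mul_of_nonneg_left hmean hLκ) _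

/-- Proposition 1: expected objective of the blended NP iterate is bounded by the
expected objective at the expert policy plus `L (1-κ)` times the weighted L²
distance between the projected solution `p` and the expert `xπ`. -/
theorem expected_blended_iterate_bound
    {Ξ : Type*} [Fintype Ξ] (q : Ξ → ℝ) (hq : ∀ ξ, 0 ≤ q ξ)
    (hqsum : ∑ ξ : Ξ, q ξ = 1)
    {E : Type*} [NormedAddCommGroup E] [InnerProductSpace ℝ E]
    (f : Ξ → E → ℝ) (L : ℝ) (hL : 0 ≤ L)
    (hf : ∀ ξ, ∀ x x' : E, |f ξ x - f ξ x'| ≤ L * ‖x - x'‖)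
    (κ : ℝ) (hκ0 : 0 ≤ κ) (hκ1 : κ ≤ 1) (xπ p : Ξ → E) :
    ∑ ξ : Ξ, q ξ * f ξ (κ • xπ ξ + (1 - κ) • p ξ) ≤
      ∑ ξ : Ξ, q ξ * f ξ (xπ ξ) +
        L * (1 - κ) * Real.sqrt (∑ ξ : Ξ, q ξ * ‖p ξ - xπ ξ‖ ^ 2) :=
  expected_blended_iterate_bound_general q hq hqsum f L hL hf κ hκ1 xπ p
end

section
/- Let H be a real inner product space and let A : H → Set H be a monotone operator, i.e. for all x, y ∈ H and all u ∈ A(x), v ∈ A(y), one has ⟪u − v, x − y⟫ ≥ 0. Let ν > 0 and let x⁰, x¹, x² ∈ H satisfy the consecutive proximal-point relations ν • (x⁰ − x¹) ∈ A(x¹) and ν • (x¹ − x²) ∈ A(x²). Then ‖x² − x¹‖ ≤ ‖x¹ − x⁰‖; i.e., the sizes of successive proximal-point steps are nonincreasing. -/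
/-!
With `a = x1 - x0` and `b = x2 - x1`, monotonicity of `A` at the two proximal steps gives
`ν ⟪a - b, b⟫ ≥ 0`, i.e. `‖b‖² ≤ ⟪a, b⟫ ≤ ‖a‖ ‖b‖` by Cauchy–Schwarz.
-/

open scoped RealInnerProductSpace

section

variable {E : Type*} [NormedAddCommGroup E] [InnerProductSpace ℝ E]

theorem norm_le_norm_of_inner_sub_nonneg {a b : E} (h : 0 ≤ ⟪a - b, b⟫) : ‖b‖ ≤ ‖a‖ := by
  have hsq : ‖b‖ * ‖b‖ ≤ ⟪a, b⟫ := by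
    rwa [inner_sub_left, real_inner_self_eq_norm_mul_norm, sub_nonneg] at h
  have hcs : ‖b‖ * ‖b‖ ≤ ‖a‖ * ‖b‖ := hsq.trans (real_inner_le_norm a b)
  rcases (norm_nonneg b).eq_or_lt with hb | hb
  · rw [← hb]
    exact norm_nonneg a
  · exact le_of_mul_le_mul_right hcs hb

theorem inner_sub_proximal_steps (ν : ℝ) (x0 x1 x2 : E) :
    ⟪ν • (x0 - x1) - ν • (x1 - x2), x1 - x2⟫ = ν * ⟪(x1 - x0) - (x2 - x1), x2 - x1⟫ := by
  rw [← smul_sub, real_inner_smul_left, ← inner_neg_neg]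
  congr 2 <;> abel

end

/-- Successive proximal-point step sizes are nonincreasing for a monotone
operator: if `ν • (x0 - x1) ∈ A x1` and `ν • (x1 - x2) ∈ A x2` with `ν > 0`,
then `‖x2 - x1‖ ≤ ‖x1 - x0‖`. -/
theorem proximal_step_sizes_nonincreasing
    {H : Type*} [NormedAddCommGroup H] [InnerProductSpace ℝ H]
    (A : H → Set H)
    (hA : ∀ x y : H, ∀ u ∈ A x, ∀ v ∈ A y, 0 ≤ ⟪u - v, x - y⟫)
    (ν : ℝ) (hν : 0 < ν) (x0 x1 x2 : H)
    (h1 : ν • (x0 - x1) ∈ A x1) (h2 : ν • (x1 - x2) ∈ A x2) :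
    ‖x2 - x1‖ ≤ ‖x1 - x0‖ := by
  have hmono := hA x1 x2 _ h1 _ h2
  rw [inner_sub_proximal_steps] at hmono
  exact norm_le_norm_of_inner_sub_nonneg (nonneg_of_mul_nonneg_right hmono hν)
end
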